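/- Surrogate dispersion for erased fair coin flips: in the erased-fair-coin-flips setting with δ/2 < d < 1/2 and λ* = log( (1 − δ/2 − d)/(d − δ/2) ), the surrogate d̄-tilted information ȷ_X(X, d) equals −λ*·d plus log( 2/(1 + exp(−λ*)) ) with probability 1 − δ and λ*/2 with probability δ; hence the surrogate rate-dispersion function equals V(d) = δ(1 − δ)·log²cosh( λ*/(2 log e) ) = Ṽ(d) − (δ/4)·(λ*)², where Ṽ(d) = δ(1 − δ)·log²cosh( λ*/(2 log e) ) + (δ/4)·(λ*)² is the noisy rate-dispersion function. -/

import Mathlib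

open scoped BigOperators

noncomputable section

/-- Equiprobable binary source. -/
def PSb : Bool → ℝ := fun _ => 1 / 2

/-- Binary erasure channel with erasure rate `δ`; `none` is the erasure symbol `?`. -/
def Wbec (δ : ℝ) : Bool → Option Bool → ℝ :=
  fun s x => if x = some s then 1 - δ else if x = none then δ else 0

/-- Bit-error (Hamming) distortion measured against the clean source. -/
def dstH : Bool → Bool → ℝ := fun s z => if s = z then 0 else 1

/-- Distribution of the channel output `X`. -/
def PXbec (δ : ℝ) (x : Option Bool) : ℝ := ∑ s, PSb s * Wbec δ s x

/-- The optimal backward channel `P_{X|Z*}`. -/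
def backB (δ d : ℝ) : Bool → Option Bool → ℝ :=
  fun b x => if x = some b then 1 - d - δ / 2 else if x = none then δ else d - δ / 2

/-- The optimal forward test channel `Q*(z|x) = P_{Z*}(z) P_{X|Z*}(x|z) / P_X(x)`. -/
def QstBes (δ d : ℝ) : Option Bool → Bool → ℝ :=
  fun x z => (1 / 2 * backB δ d z x) / PXbec δ x

/-- Output marginal of the optimal test channel. -/
def PZstBes (δ d : ℝ) (z : Bool) : ℝ := ∑ x, PXbec δ x * QstBes δ d x z

/-- Information density `ı_{X;Z*}(x; z) = log (Q*(z|x) / P_{Z*}(z))`. -/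
def iXZ (δ d : ℝ) (x : Option Bool) (z : Bool) : ℝ :=
  Real.log (QstBes δ d x z / PZstBes δ d z)

/-- Noisy d-tilted information evaluated with the optimal reproduction. -/
def jtBes (δ d lam : ℝ) (s : Bool) (x : Option Bool) (z : Bool) : ℝ :=
  iXZ δ d x z + lam * dstH s z - lam * d

/-- Joint mass of `(S, X, Z*)` under `PSb ⊗ Wbec δ ⊗ QstBes δ d`. -/
def massBes (δ d : ℝ) (s : Bool) (x : Option Bool) (z : Bool) : ℝ :=
  PSb s * Wbec δ s x * QstBes δ d x z

/-- Surrogate d̄-tilted information, obtained by averaging the noisy d-tilted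
information over `P_{S|X=x}` (and over the optimal reproduction `Z*`). -/
def jXBes (δ d lam : ℝ) (x : Option Bool) : ℝ :=
  ∑ s, ∑ z, (PSb s * Wbec δ s x / PXbec δ x) * QstBes δ d x z * jtBes δ d lam s x z

/-- The noisy rate-dispersion function `Ṽ(d) = Var[ȷ̃_{S,X}(S,X,d)]`. -/
def VtBes (δ d lam : ℝ) : ℝ :=
  (∑ s, ∑ x, ∑ z, massBes δ d s x z * (jtBes δ d lam s x z) ^ 2)
    - (∑ s, ∑ x, ∑ z, massBes δ d s x z * jtBes δ d lam s x z) ^ 2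

/-!
Write a = d − δ/2 and b = 1 − d − δ/2, so that λ* = log (b/a) and a + b = 1 − δ. Given an
unerased output the noisy tilted information does not depend on the reproduction: a mismatch
costs λ* in distortion and gains exactly log (b/a) in information density, so it equals
log (2b/(1 − δ)) − λ* d. Given an erasure the information density vanishes and it equals
λ* (1{S ≠ Z} − d) with S, Z independent fair bits. Hence ȷ_X takes two values, which differ by
log cosh (λ*/2), giving V(d); and Ṽ(d) exceeds V(d) by the conditional variance λ*²/4 of the
erased case, which has probability δ.
-/

open Real

lemma log_cosh_half_log_div {a b : ℝ} (ha : 0 < a) (hb : 0 < b) :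
    log (cosh (log (b / a) / 2)) = log (b / a) / 2 - log (2 * b / (a + b)) := by
  set L := log (b / a)
  have hexp_neg : exp (-(L / 2)) = exp (L / 2) * (a / b) := by
    rw [show -(L / 2) = L / 2 + -L by ring, exp_add, exp_neg, exp_log (div_pos hb ha), inv_div]
  have hcosh : cosh (L / 2) = exp (L / 2) * (2 * b / (a + b))⁻¹ := by
    rw [cosh_eq, hexp_neg]
    field_simp
    ring
  rw [hcosh, log_mul (exp_ne_zero _) (by positivity), log_exp, log_inv]
  ring

lemma log_two_div_one_add_exp_neg_log_div {a b : ℝ} (ha : 0 < a) (hb : 0 < b) :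
    log (2 / (1 + exp (-log (b / a)))) = log (2 * b / (a + b)) := by
  rw [exp_neg, exp_log (div_pos hb ha), inv_div]
  congr 1
  field_simp
  ring

section ErasureChannel

variable {δ d lam : ℝ}

lemma PXbec_some (t : Bool) : PXbec δ (some t) = (1 - δ) / 2 := by
  rw [PXbec, Fintype.sum_eq_single t fun s hs => by simp [Wbec, Ne.symm hs], Wbec, if_pos rfl, PSb]
  ring

lemma PXbec_none : PXbec δ none = δ := by
  simp [PXbec, PSb, Wbec]

lemma PXbec_ne_zero (hδ : δ ≠ 0) (hδ' : 1 - δ ≠ 0) : ∀ x, PXbec δ x ≠ 0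
  | none => by rwa [PXbec_none]
  | some t => by rw [PXbec_some]; exact div_ne_zero hδ' two_ne_zero

lemma sum_backB (z : Bool) : ∑ x, backB δ d z x = 1 := by
  rw [Fintype.sum_option, Fintype.sum_bool]
  cases z <;> simp only [backB, reduceCtorEq, Option.some.injEq, Bool.true_eq_false,
    Bool.false_eq_true, if_true, if_false] <;> ring

lemma PXbec_mul_QstBes {x : Option Bool} (hx : PXbec δ x ≠ 0) (z : Bool) :
    PXbec δ x * QstBes δ d x z = backB δ d z x / 2 := by
  rw [QstBes, mul_div_cancel₀ _ hx]
  ring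

lemma PZstBes_eq_half (hδ : δ ≠ 0) (hδ' : 1 - δ ≠ 0) (z : Bool) : PZstBes δ d z = 1 / 2 := by
  simp only [PZstBes, PXbec_mul_QstBes (PXbec_ne_zero hδ hδ' _), ← Finset.sum_div, sum_backB]

lemma QstBes_some (t z : Bool) :
    QstBes δ d (some t) z = (if z = t then 1 - d - δ / 2 else d - δ / 2) / (1 - δ) := by
  rw [QstBes, PXbec_some, mul_comm, show (1 - δ) / 2 = (1 - δ) * (1 / 2) by ring,
    mul_div_mul_right _ _ one_half_pos.ne']
  by_cases h : z = t
  · simp [backB, h]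
  · simp [backB, h, Ne.symm h]

lemma QstBes_none (hδ : δ ≠ 0) (z : Bool) : QstBes δ d none z = 1 / 2 := by
  rw [QstBes, backB, if_neg nofun, if_pos rfl, PXbec_none]
  field_simp

lemma sum_QstBes_some (hδ' : 1 - δ ≠ 0) (t : Bool) : ∑ z, QstBes δ d (some t) z = 1 := by
  rw [Fintype.sum_bool]
  cases t <;> simp only [QstBes_some, Bool.true_eq_false, Bool.false_eq_true, if_true, if_false] <;>
    field_simp <;> ring

lemma posterior_some (hδ' : 1 - δ ≠ 0) (s t : Bool) :
    PSb s * Wbec δ s (some t) / PXbec δ (some t) = if s = t then 1 else 0 := by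
  rw [PXbec_some]
  by_cases h : s = t
  · rw [h, if_pos rfl, Wbec, if_pos rfl, PSb]
    field_simp
  · simp [PSb, Wbec, Ne.symm h, h]

lemma posterior_none (hδ : δ ≠ 0) (s : Bool) : PSb s * Wbec δ s none / PXbec δ none = 1 / 2 := by
  rw [Wbec, if_neg nofun, if_pos rfl, PXbec_none, PSb]
  field_simp

lemma iXZ_some (hδ : δ ≠ 0) (hδ' : 1 - δ ≠ 0) (t z : Bool) :
    iXZ δ d (some t) z = log (2 * (if z = t then 1 - d - δ / 2 else d - δ / 2) / (1 - δ)) := by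
  rw [iXZ, QstBes_some, PZstBes_eq_half hδ hδ']
  ring_nf

lemma iXZ_none (hδ : δ ≠ 0) (hδ' : 1 - δ ≠ 0) (z : Bool) : iXZ δ d none z = 0 := by
  rw [iXZ, QstBes_none hδ, PZstBes_eq_half hδ hδ', div_self one_half_pos.ne', log_one]

lemma jtBes_some_self (hδ : δ ≠ 0) (ha : 0 < d - δ / 2) (hb : 0 < 1 - d - δ / 2)
    (hlam : lam = log ((1 - d - δ / 2) / (d - δ / 2))) (t z : Bool) :
    jtBes δ d lam t (some t) z = log (2 * (1 - d - δ / 2) / (1 - δ)) - lam * d := by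
  have hδ' : 1 - δ ≠ 0 := by linarith
  rw [jtBes, iXZ_some hδ hδ']
  by_cases h : z = t
  · simp [h, dstH]
  · simp only [h, if_false, dstH, Ne.symm h, hlam]
    rw [mul_one, ← log_mul (by positivity) (by positivity)]
    congr 2
    generalize d - δ / 2 = a at ha
    field_simp

lemma jtBes_none (hδ : δ ≠ 0) (hδ' : 1 - δ ≠ 0) (s z : Bool) :
    jtBes δ d lam s none z = lam * dstH s z - lam * d := by
  rw [jtBes, iXZ_none hδ hδ', zero_add]

lemma jXBes_some (hδ' : 1 - δ ≠ 0) {t : Bool} {u : ℝ}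
    (hu : ∀ z, jtBes δ d lam t (some t) z = u) : jXBes δ d lam (some t) = u := by
  rw [jXBes, Fintype.sum_eq_single t fun s hs => by simp [posterior_some hδ', hs]]
  simp only [posterior_some hδ', if_true, one_mul, hu, ← Finset.sum_mul, sum_QstBes_some hδ']

lemma jXBes_none (hδ : δ ≠ 0) (hδ' : 1 - δ ≠ 0) : jXBes δ d lam none = lam / 2 - lam * d := by
  simp only [jXBes, Fintype.sum_bool, posterior_none hδ, QstBes_none hδ, jtBes_none hδ hδ', dstH,
    Bool.true_eq_false, Bool.false_eq_true, if_true, if_false]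
  ring

lemma variance_jXBes {u v : ℝ} (hu : ∀ t, jXBes δ d lam (some t) = u)
    (hv : jXBes δ d lam none = v) :
    (∑ x, PXbec δ x * jXBes δ d lam x ^ 2) - (∑ x, PXbec δ x * jXBes δ d lam x) ^ 2
      = δ * (1 - δ) * (u - v) ^ 2 := by
  simp only [Fintype.sum_option, Fintype.sum_bool, hu, hv, PXbec_some, PXbec_none]
  ring

lemma VtBes_eq (hδ : δ ≠ 0) (hδ' : 1 - δ ≠ 0) {u : ℝ}
    (hu : ∀ t z, jtBes δ d lam t (some t) z = u) :
    VtBes δ d lam = δ * (1 - δ) * (u - (lam / 2 - lam * d)) ^ 2 + δ / 4 * lam ^ 2 := by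
  simp only [VtBes, massBes, Fintype.sum_option, Fintype.sum_bool, PSb, Wbec, hu,
    jtBes_none hδ hδ', QstBes_none hδ, dstH, QstBes_some, reduceCtorEq, Option.some.injEq,
    Bool.true_eq_false, Bool.false_eq_true, if_true, if_false, mul_zero, zero_mul, add_zero, zero_add]
  field_simp
  ring

lemma sum_PXbec_unerased {f : Option Bool → ℝ} {c : ℝ} (hf : ∀ t, f (some t) = c) :
    ∑ x, PXbec δ x * (if x ≠ none ∧ f x = c then (1 : ℝ) else 0) = 1 - δ := by
  rw [Fintype.sum_option, Fintype.sum_bool, if_neg (by simp), if_pos ⟨nofun, hf _⟩,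
    if_pos ⟨nofun, hf _⟩, PXbec_some, PXbec_some]
  ring

lemma sum_PXbec_erased {f : Option Bool → ℝ} {c : ℝ} (hf : f none = c) :
    ∑ x, PXbec δ x * (if x = none ∧ f x = c then (1 : ℝ) else 0) = δ := by
  simp [Fintype.sum_option, hf, PXbec_none]

end ErasureChannel

theorem surrogate_dispersion_erased_fair_coin_flips_general
    (δ d : ℝ) (hδ0 : 0 < δ)
    (hd1 : δ / 2 < d) (hd2 : d < 1 / 2)
    (lam : ℝ) (hlam : lam = Real.log ((1 - δ / 2 - d) / (d - δ / 2))) :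
    -- value log(2/(1+exp(−λ*))) − λ* d, w.p. 1−δ (no erasure)
    (∑ x, PXbec δ x *
        (if x ≠ none ∧
            jXBes δ d lam x = -lam * d + Real.log (2 / (1 + Real.exp (-lam)))
         then (1:ℝ) else 0)) = 1 - δ ∧
    -- value λ*/2 − λ* d, w.p. δ (erasure)
    (∑ x, PXbec δ x *
        (if x = none ∧ jXBes δ d lam x = -lam * d + lam / 2
         then (1:ℝ) else 0)) = δ ∧
    -- V(d) = Var[ȷ_X(X,d)] = δ(1−δ) log² cosh(λ*/(2 log e))
    ((∑ x, PXbec δ x * (jXBes δ d lam x) ^ 2) - (∑ x, PXbec δ x * jXBes δ d lam x) ^ 2)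
      = δ * (1 - δ) * Real.log (Real.cosh (lam / (2 * Real.log (Real.exp 1)))) ^ 2 ∧
    -- V(d) = Ṽ(d) − (δ/4)(λ*)²
    ((∑ x, PXbec δ x * (jXBes δ d lam x) ^ 2) - (∑ x, PXbec δ x * jXBes δ d lam x) ^ 2)
      = VtBes δ d lam - δ / 4 * lam ^ 2 ∧
    -- Ṽ(d) = δ(1−δ) log² cosh(λ*/(2 log e)) + (δ/4)(λ*)²
    VtBes δ d lam
      = δ * (1 - δ) * Real.log (Real.cosh (lam / (2 * Real.log (Real.exp 1)))) ^ 2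
        + δ / 4 * lam ^ 2 := by
  have ha : 0 < d - δ / 2 := by linarith
  have hb : 0 < 1 - d - δ / 2 := by linarith
  have hδ : δ ≠ 0 := hδ0.ne'
  have hab : d - δ / 2 + (1 - d - δ / 2) = 1 - δ := by ring
  have hδ' : 1 - δ ≠ 0 := by rw [← hab]; positivity
  have hlam' : lam = log ((1 - d - δ / 2) / (d - δ / 2)) := by rw [hlam]; ring_nf
  set u := log (2 * (1 - d - δ / 2) / (1 - δ)) - lam * d
  have hjt : ∀ t z, jtBes δ d lam t (some t) z = u := jtBes_some_self hδ ha hb hlam'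
  have hjX : ∀ t, jXBes δ d lam (some t) = u := fun t => jXBes_some hδ' (hjt t)
  have hcosh :
      log (cosh (lam / (2 * log (exp 1)))) = lam / 2 - log (2 * (1 - d - δ / 2) / (1 - δ)) := by
    rw [log_exp, mul_one, hlam', log_cosh_half_log_div ha hb, ← hlam', hab]
  have hV := variance_jXBes hjX (jXBes_none hδ hδ')
  have hVt := VtBes_eq hδ hδ' hjt
  refine ⟨sum_PXbec_unerased fun t => ?_, sum_PXbec_erased (by rw [jXBes_none hδ hδ']; ring),
    ?_, ?_, ?_⟩
  · rw [hjX, hlam', log_two_div_one_add_exp_neg_log_div ha hb, ← hlam', hab]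
    ring
  · rw [hV, hcosh]
    ring
  · rw [hV, hVt]
    ring
  · rw [hVt, hcosh]
    ring

/-- **Surrogate dispersion for erased fair coin flips** (Eqs. (50)–(52)): with
`λ* = log((1 − δ/2 − d)/(d − δ/2))`, the surrogate d̄-tilted information equals `−λ* d`
plus `log(2/(1+e^{−λ*}))` with probability `1−δ` and `λ*/2` with probability `δ`; hence
`V(d) = δ(1−δ) log² cosh(λ*/(2 log e)) = Ṽ(d) − (δ/4)(λ*)²`, where
`Ṽ(d) = δ(1−δ) log² cosh(λ*/(2 log e)) + (δ/4)(λ*)²` is the noisy rate-dispersion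
function. -/
theorem surrogate_dispersion_erased_fair_coin_flips
    (δ d : ℝ) (hδ0 : 0 < δ) (hδ1 : δ < 1)
    (hd1 : δ / 2 < d) (hd2 : d < 1 / 2)
    (lam : ℝ) (hlam : lam = Real.log ((1 - δ / 2 - d) / (d - δ / 2))) :
    -- value log(2/(1+exp(−λ*))) − λ* d, w.p. 1−δ (no erasure)
    (∑ x, PXbec δ x *
        (if x ≠ none ∧
            jXBes δ d lam x = -lam * d + Real.log (2 / (1 + Real.exp (-lam)))
         then (1:ℝ) else 0)) = 1 - δ ∧
    -- value λ*/2 − λ* d, w.p. δ (erasure)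
    (∑ x, PXbec δ x *
        (if x = none ∧ jXBes δ d lam x = -lam * d + lam / 2
         then (1:ℝ) else 0)) = δ ∧
    -- V(d) = Var[ȷ_X(X,d)] = δ(1−δ) log² cosh(λ*/(2 log e))
    ((∑ x, PXbec δ x * (jXBes δ d lam x) ^ 2) - (∑ x, PXbec δ x * jXBes δ d lam x) ^ 2)
      = δ * (1 - δ) * Real.log (Real.cosh (lam / (2 * Real.log (Real.exp 1)))) ^ 2 ∧
    -- V(d) = Ṽ(d) − (δ/4)(λ*)²
    ((∑ x, PXbec δ x * (jXBes δ d lam x) ^ 2) - (∑ x, PXbec δ x * jXBes δ d lam x) ^ 2)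
      = VtBes δ d lam - δ / 4 * lam ^ 2 ∧
    -- Ṽ(d) = δ(1−δ) log² cosh(λ*/(2 log e)) + (δ/4)(λ*)²
    VtBes δ d lam
      = δ * (1 - δ) * Real.log (Real.cosh (lam / (2 * Real.log (Real.exp 1)))) ^ 2
        + δ / 4 * lam ^ 2 :=
  surrogate_dispersion_erased_fair_coin_flips_general δ d hδ0 hd1 hd2 lam hlam
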